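/- Coercivity of the least-squares bilinear form: let Ω ⊂ ℝ^d be bounded Lipschitz, A ∈ L^∞(Ω)^{d×d} symmetric with smallest eigenvalue ≥ α₀ > 0 a.e., β ∈ L^∞(Ω)^d with div β ∈ L^∞(Ω), γ ∈ L^∞(Ω), and (1/2)div β + γ ≥ 0 a.e. For k ∈ (0,T], define on U = H¹_0(Ω) × H(div,Ω) the form b((u,σ),(v,τ)) = ⟨u, −div τ − β·∇v + γv⟩ + ⟨−div σ − β·∇u + γu, v⟩ + k⟨−div σ − β·∇u + γu, −div τ − β·∇v + γv⟩ + ⟨A^{1/2}∇u − A^{−1/2}σ, A^{1/2}∇v − A^{−1/2}τ⟩. Then there exists c > 0 independent of k such that b((u,σ),(u,σ)) ≥ c·(‖∇u‖² + ‖σ‖² + k‖div σ‖²) for all (u,σ) ∈ U. -/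

import Mathlib

/-!
Expanding the square `‖A^{1/2}∇u − A^{−1/2}σ‖²` produces `−2⟨∇u, σ⟩`, which integration by parts
cancels against the `−div σ` part of `2⟨u, −div σ − β·∇u + γu⟩`; what remains is the nonnegative
term `2⟨u, γu − β·∇u⟩`, the residual term `k‖−div σ − β·∇u + γu‖²` and `‖A^{1/2}∇u‖² + ‖A^{−1/2}σ‖²`,
which controls `‖∇u‖² + ‖σ‖²`. Finally `‖div σ‖` is bounded by the residual plus
`‖β·∇u‖ + ‖γu‖ ≲ ‖∇u‖` (Friedrichs), and `k ≤ T` keeps the constant uniform in `k`.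
-/

open RealInnerProductSpace

theorem sq_norm_le_sq_mul_sq_norm {E F : Type*} [SeminormedAddCommGroup E]
    [SeminormedAddCommGroup F] {x : E} {y : F} {C : ℝ} (h : ‖x‖ ≤ C * ‖y‖) :
    ‖x‖ ^ 2 ≤ C ^ 2 * ‖y‖ ^ 2 := by
  simpa only [mul_pow] using pow_le_pow_left₀ (norm_nonneg x) h 2

theorem norm_add_add_sq_le {E : Type*} [SeminormedAddCommGroup E] (a b c : E) :
    ‖a + b + c‖ ^ 2 ≤ 3 * (‖a‖ ^ 2 + ‖b‖ ^ 2 + ‖c‖ ^ 2) := by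
  have h := pow_le_pow_left₀ (norm_nonneg _) (norm_add₃_le (a := a) (b := b) (c := c)) 2
  nlinarith [sq_nonneg (‖a‖ - ‖b‖), sq_nonneg (‖a‖ - ‖c‖), sq_nonneg (‖b‖ - ‖c‖)]

/-- The choice of the coercivity constant, as a statement about real numbers: `g`, `s`, `d`, `r`
stand for `‖∇u‖²`, `‖σ‖²`, `‖div σ‖²` and the squared residual. -/
theorem exists_uniform_coercivity_const {α m T K : ℝ} (hα : 0 < α) (hm : 0 < m) (hT : 0 < T)
    (hK : 0 ≤ K) :
    ∃ c > 0, ∀ k : ℝ, 0 < k → k ≤ T → ∀ g s d r a t : ℝ, 0 ≤ g → 0 ≤ s → 0 ≤ r →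
      d ≤ 3 * r + 3 * K * g → α * g ≤ a → s ≤ m * t →
        c * (g + s + k * d) ≤ k * r + a + t := by
  have hden : 0 < 1 + 3 * T * K := by positivity
  set c := min (min (α / (1 + 3 * T * K)) m⁻¹) (1 / 3)
  have hcα : c * (1 + 3 * T * K) ≤ α :=
    (le_div_iff₀ hden).mp ((min_le_left _ _).trans (min_le_left _ _))
  have hcm : c * m ≤ 1 :=
    calc c * m ≤ m⁻¹ * m := by gcongr; exact (min_le_left _ _).trans (min_le_right _ _)
      _ = 1 := inv_mul_cancel₀ hm.ne'
  have hc3 : 3 * c ≤ 1 := by linarith [min_le_right (min (α / (1 + 3 * T * K)) m⁻¹) (1 / 3)]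
  have hc : 0 < c := by positivity
  refine ⟨c, hc, fun k hk hkT g s d r a t hg hs hr hd ha hst => ?_⟩
  have hkd : c * k * d ≤ k * r + 3 * c * T * K * g := by
    nlinarith [mul_le_mul_of_nonneg_left hd (mul_nonneg hc.le hk.le),
      mul_le_mul_of_nonneg_right hc3 (mul_nonneg hk.le hr),
      mul_le_mul_of_nonneg_right hkT (by positivity : 0 ≤ 3 * c * K * g)]
  have hgc : c * g + 3 * c * T * K * g ≤ a := by
    linarith [mul_le_mul_of_nonneg_right hcα hg]
  have hsc : c * s ≤ t := by
    refine le_of_mul_le_mul_left ?_ hm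
    linarith [mul_le_mul_of_nonneg_right hcm hs]
  linarith

section LeastSquares

variable {H S L Lv : Type*} [AddCommGroup H] [Module ℝ H] [AddCommGroup S] [Module ℝ S]
  [NormedAddCommGroup L] [InnerProductSpace ℝ L] [NormedAddCommGroup Lv] [InnerProductSpace ℝ Lv]
  {ι : H →ₗ[ℝ] L} {grad : H →ₗ[ℝ] Lv} {Bgrad Gmul : H →ₗ[ℝ] L} {ιS : S →ₗ[ℝ] Lv}
  {dvg : S →ₗ[ℝ] L} {Asq AsqInv : Lv →ₗ[ℝ] Lv}

theorem least_squares_form_eq (hibp : ∀ (u : H) (σ : S), ⟪ι u, dvg σ⟫ = - ⟪grad u, ιS σ⟫)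
    (hA : ∀ x y : Lv, ⟪Asq x, AsqInv y⟫ = ⟪x, y⟫) (k : ℝ) (u : H) (σ : S) :
    ⟪ι u, - dvg σ - Bgrad u + Gmul u⟫ + ⟪- dvg σ - Bgrad u + Gmul u, ι u⟫
        + k * ‖- dvg σ - Bgrad u + Gmul u‖ ^ 2 + ‖Asq (grad u) - AsqInv (ιS σ)‖ ^ 2 =
      2 * ⟪ι u, Gmul u - Bgrad u⟫ + k * ‖- dvg σ - Bgrad u + Gmul u‖ ^ 2
        + ‖Asq (grad u)‖ ^ 2 + ‖AsqInv (ιS σ)‖ ^ 2 := by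
  have hres : ⟪ι u, - dvg σ - Bgrad u + Gmul u⟫ = ⟪grad u, ιS σ⟫ + ⟪ι u, Gmul u - Bgrad u⟫ := by
    rw [show - dvg σ - Bgrad u + Gmul u = - dvg σ + (Gmul u - Bgrad u) by abel,
      inner_add_right, inner_neg_right, hibp]
    ring
  rw [real_inner_comm (ι u), hres, norm_sub_sq_real, hA]
  ring

theorem norm_dvg_sq_le {CF Cβ Cγ : ℝ} (hF : ∀ u : H, ‖ι u‖ ≤ CF * ‖grad u‖)
    (hβ : ∀ u : H, ‖Bgrad u‖ ≤ Cβ * ‖grad u‖) (hγ : ∀ u : H, ‖Gmul u‖ ≤ Cγ * ‖ι u‖)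
    (u : H) (σ : S) :
    ‖dvg σ‖ ^ 2 ≤ 3 * ‖- dvg σ - Bgrad u + Gmul u‖ ^ 2
      + 3 * (Cβ ^ 2 + CF ^ 2 * Cγ ^ 2) * ‖grad u‖ ^ 2 := by
  have hsplit := norm_add_add_sq_le (-(- dvg σ - Bgrad u + Gmul u)) (- Bgrad u) (Gmul u)
  rw [norm_neg, norm_neg, show -(- dvg σ - Bgrad u + Gmul u) + - Bgrad u + Gmul u = dvg σ by abel]
    at hsplit
  have hι := sq_norm_le_sq_mul_sq_norm (hF u)
  nlinarith [sq_norm_le_sq_mul_sq_norm (hβ u), sq_norm_le_sq_mul_sq_norm (hγ u),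
    mul_le_mul_of_nonneg_left hι (sq_nonneg Cγ)]

end LeastSquares

theorem stmt7_general {H S L Lv : Type*}
    [AddCommGroup H] [Module ℝ H] [AddCommGroup S] [Module ℝ S]
    [NormedAddCommGroup L] [InnerProductSpace ℝ L]
    [NormedAddCommGroup Lv] [InnerProductSpace ℝ Lv]
    (ι : H →ₗ[ℝ] L) (grad : H →ₗ[ℝ] Lv) (Bgrad Gmul : H →ₗ[ℝ] L)
    (ιS : S →ₗ[ℝ] Lv) (dvg : S →ₗ[ℝ] L)
    (Asq AsqInv : Lv →ₗ[ℝ] Lv)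
    (T CF Cβ Cγ α₀ MA : ℝ)
    (hT : 0 < T) (hα₀ : 0 < α₀) (hMA : 0 < MA)
    (hF : ∀ uu : H, ‖ι uu‖ ≤ CF * ‖grad uu‖)
    (hβb : ∀ uu : H, ‖Bgrad uu‖ ≤ Cβ * ‖grad uu‖)
    (hγb : ∀ uu : H, ‖Gmul uu‖ ≤ Cγ * ‖ι uu‖)
    (hpos : ∀ uu : H, 0 ≤ ⟪ι uu, Gmul uu - Bgrad uu⟫)
    (hibp : ∀ (uu : H) (σ : S), ⟪ι uu, dvg σ⟫ = - ⟪grad uu, ιS σ⟫)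
    (hA1 : ∀ x y : Lv, ⟪Asq x, AsqInv y⟫ = ⟪x, y⟫)
    (hA2 : ∀ x : Lv, α₀ * ‖x‖ ^ 2 ≤ ‖Asq x‖ ^ 2)
    (hA3 : ∀ x : Lv, ‖x‖ ^ 2 ≤ MA * ‖AsqInv x‖ ^ 2) :
    ∃ c > 0, ∀ k : ℝ, 0 < k → k ≤ T → ∀ (u : H) (σ : S),
      c * (‖grad u‖ ^ 2 + ‖ιS σ‖ ^ 2 + k * ‖dvg σ‖ ^ 2) ≤
        ⟪ι u, - dvg σ - Bgrad u + Gmul u⟫ + ⟪- dvg σ - Bgrad u + Gmul u, ι u⟫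
        + k * ‖- dvg σ - Bgrad u + Gmul u‖ ^ 2
        + ‖Asq (grad u) - AsqInv (ιS σ)‖ ^ 2 := by
  obtain ⟨c, hc, hcoercive⟩ :=
    exists_uniform_coercivity_const hα₀ hMA hT (by positivity : 0 ≤ Cβ ^ 2 + CF ^ 2 * Cγ ^ 2)
  refine ⟨c, hc, fun k hk hkT u σ => ?_⟩
  rw [least_squares_form_eq hibp hA1]
  have := hcoercive k hk hkT _ _ _ _ _ _ (sq_nonneg ‖grad u‖) (sq_nonneg ‖ιS σ‖)
    (sq_nonneg ‖- dvg σ - Bgrad u + Gmul u‖) (norm_dvg_sq_le hF hβb hγb u σ) (hA2 _) (hA3 _)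
  linarith [hpos u]

/-- Coercivity of the least-squares bilinear form `b` (Lemma 1), in an abstract
Hilbert-space formulation: `H` plays the role of `H¹₀(Ω)`, `S` of `H(div,Ω)`,
`L` of `L²(Ω)` and `Lv` of `L²(Ω)^d`.  The maps are: `ι` the embedding of `H¹₀`
into `L²`, `grad` the gradient, `Bgrad : u ↦ β·∇u`, `Gmul : u ↦ γu`, `ιS` the
embedding of `H(div)` into `L²(Ω)^d`, `dvg` the divergence, and `Asq`, `AsqInv`
multiplication by `A^{1/2}` and `A^{−1/2}`.  The hypotheses encode Friedrichs'
inequality, boundedness of the coefficients, the sign condition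
`(1/2)div β + γ ≥ 0`, integration by parts, and uniform positive definiteness
and boundedness of `A`.  The coercivity constant `c` is independent of `k ∈ (0,T]`. -/
theorem stmt7 {H S L Lv : Type*}
    [AddCommGroup H] [Module ℝ H] [AddCommGroup S] [Module ℝ S]
    [NormedAddCommGroup L] [InnerProductSpace ℝ L]
    [NormedAddCommGroup Lv] [InnerProductSpace ℝ Lv]
    (ι : H →ₗ[ℝ] L) (grad : H →ₗ[ℝ] Lv) (Bgrad Gmul : H →ₗ[ℝ] L)
    (ιS : S →ₗ[ℝ] Lv) (dvg : S →ₗ[ℝ] L)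
    (Asq AsqInv : Lv →ₗ[ℝ] Lv)
    (T CF Cβ Cγ α₀ MA : ℝ)
    (hT : 0 < T) (hα₀ : 0 < α₀) (hMA : 0 < MA) (hCF : 0 < CF)
    (hF : ∀ uu : H, ‖ι uu‖ ≤ CF * ‖grad uu‖)
    (hβb : ∀ uu : H, ‖Bgrad uu‖ ≤ Cβ * ‖grad uu‖)
    (hγb : ∀ uu : H, ‖Gmul uu‖ ≤ Cγ * ‖ι uu‖)
    (hpos : ∀ uu : H, 0 ≤ ⟪ι uu, Gmul uu - Bgrad uu⟫)
    (hibp : ∀ (uu : H) (σ : S), ⟪ι uu, dvg σ⟫ = - ⟪grad uu, ιS σ⟫)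
    (hA1 : ∀ x y : Lv, ⟪Asq x, AsqInv y⟫ = ⟪x, y⟫)
    (hA2 : ∀ x : Lv, α₀ * ‖x‖ ^ 2 ≤ ‖Asq x‖ ^ 2)
    (hA3 : ∀ x : Lv, ‖x‖ ^ 2 ≤ MA * ‖AsqInv x‖ ^ 2) :
    ∃ c > 0, ∀ k : ℝ, 0 < k → k ≤ T → ∀ (u : H) (σ : S),
      c * (‖grad u‖ ^ 2 + ‖ιS σ‖ ^ 2 + k * ‖dvg σ‖ ^ 2) ≤
        ⟪ι u, - dvg σ - Bgrad u + Gmul u⟫ + ⟪- dvg σ - Bgrad u + Gmul u, ι u⟫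
        + k * ‖- dvg σ - Bgrad u + Gmul u‖ ^ 2
        + ‖Asq (grad u) - AsqInv (ιS σ)‖ ^ 2 :=
  stmt7_general ι grad Bgrad Gmul ιS dvg Asq AsqInv T CF Cβ Cγ α₀ MA hT hα₀ hMA hF hβb hγb hpos hibp
    hA1 hA2 hA3
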